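/- Let K be a field and G a subgroup of the multiplicative group K^×. Then O_G is nontrivial (O_G ≠ K) if and only if G ≠ K^× and there exists a nontrivial valuation subring of K that is weakly compatible with G. -/

import Mathlib

/-- `O` is weakly compatible with `G` if there is an ideal `A` of `O` with radical the
maximal ideal and `1 + A ⊆ G`. -/
def WeaklyCompatible {K : Type*} [Field K] (O : ValuationSubring K) (G : Subgroup Kˣ) : Prop :=
  ∃ A : Ideal O, A.radical = IsLocalRing.maximalIdeal O ∧ ∀ a ∈ A, ∃ u ∈ G, (u : K) = 1 + (a : K)

/-- `O` is coarsely compatible with `G` if it is weakly compatible with `G` and no valuation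
subring properly containing `O` has its unit group contained in `G`. -/
def CoarselyCompatible {K : Type*} [Field K] (O : ValuationSubring K) (G : Subgroup Kˣ) : Prop :=
  WeaklyCompatible O G ∧ ∀ O' : ValuationSubring K, O < O' → ¬ (O'.unitGroup ≤ G)

/-!
The coarsenings of a valuation ring `O` form a chain, and weak compatibility passes
from `O` to its coarsenings. Given a nontrivial `O` weakly compatible with `G`, either `O` is
already coarsely compatible, or the union of all coarsenings of `O` with unit group inside `G` is
a coarsening with the same property that is maximal, hence coarsely compatible; it is nontrivial
because the unit group of `K` is all of `Kˣ` and `G ≠ Kˣ`. Conversely, if `Kˣ = G` then no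
nontrivial valuation ring is coarsely compatible with `G`, since `K` itself is a coarsening.
-/

namespace ValuationSubring

variable {K : Type*} [Field K]

theorem coe_eq_univ_iff {A : ValuationSubring K} : (A : Set K) = Set.univ ↔ A = ⊤ :=
  ⟨fun h => top_unique fun x _ => Set.eq_univ_iff_forall.mp h x,
    fun h => h ▸ Set.eq_univ_of_forall mem_top⟩

theorem le_total_of_le {O O₁ O₂ : ValuationSubring K} (h₁ : O ≤ O₁) (h₂ : O ≤ O₂) :
    O₁ ≤ O₂ ∨ O₂ ≤ O₁ :=
  le_total (⟨O₁, h₁⟩ : {S // O ≤ S}) ⟨O₂, h₂⟩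

theorem mem_unitGroup_iff_mem_and_inv_mem {A : ValuationSubring K} {u : Kˣ} :
    u ∈ A.unitGroup ↔ (u : K) ∈ A ∧ ((u⁻¹ : Kˣ) : K) ∈ A := by
  rw [mem_unitGroup_iff, ← valuation_le_one_iff, ← valuation_le_one_iff,
    Units.val_inv_eq_inv_val, map_inv₀, inv_le_one₀ ((Valuation.pos_iff _).mpr u.ne_zero), ← le_antisymm_iff]

theorem unitGroup_top : (⊤ : ValuationSubring K).unitGroup = ⊤ :=
  _root_.eq_top_iff.mpr fun _ _ => mem_unitGroup_iff_mem_and_inv_mem.mpr ⟨mem_top _, mem_top _⟩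

section iSup

variable {ι : Sort*} [Nonempty ι] (f : ι → ValuationSubring K)

def iSupOfNonempty : ValuationSubring K where
  toSubring := ⨆ i, (f i).toSubring
  mem_or_inv_mem' x :=
    have i := Classical.arbitrary ι
    ((f i).mem_or_inv_mem x).imp
      (fun hx => le_iSup (fun i => (f i).toSubring) i hx)
      (fun hx => le_iSup (fun i => (f i).toSubring) i hx)

variable {f}

theorem le_iSupOfNonempty (i : ι) : f i ≤ iSupOfNonempty f :=
  le_iSup (fun i => (f i).toSubring) i

theorem mem_iSupOfNonempty (hf : Directed (· ≤ ·) f) {x : K} :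
    x ∈ iSupOfNonempty f ↔ ∃ i, x ∈ f i :=
  Subring.mem_iSup_of_directed (hf.mono_comp _ fun _ _ h => h)

theorem unitGroup_iSupOfNonempty_le (hf : Directed (· ≤ ·) f) {H : Subgroup Kˣ}
    (h : ∀ i, (f i).unitGroup ≤ H) : (iSupOfNonempty f).unitGroup ≤ H := by
  intro u hu
  obtain ⟨hu, hu'⟩ := mem_unitGroup_iff_mem_and_inv_mem.mp hu
  obtain ⟨i, hi⟩ := (mem_iSupOfNonempty hf).mp hu
  obtain ⟨j, hj⟩ := (mem_iSupOfNonempty hf).mp hu'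
  obtain ⟨k, hik, hjk⟩ := hf i j
  exact h k (mem_unitGroup_iff_mem_and_inv_mem.mpr ⟨hik hi, hjk hj⟩)

end iSup

theorem exists_maximal_coarsening_unitGroup_le {O O₀ : ValuationSubring K} {H : Subgroup Kˣ}
    (hle : O ≤ O₀) (hH : O₀.unitGroup ≤ H) :
    ∃ O' : ValuationSubring K, O ≤ O' ∧ O'.unitGroup ≤ H ∧
      ∀ O'' : ValuationSubring K, O' < O'' → ¬ O''.unitGroup ≤ H := by
  let ι := {O' : ValuationSubring K // O ≤ O' ∧ O'.unitGroup ≤ H}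
  have : Nonempty ι := ⟨⟨O₀, hle, hH⟩⟩
  have hdir : Directed (· ≤ ·) (Subtype.val : ι → ValuationSubring K) := fun i j =>
    (le_total_of_le i.2.1 j.2.1).elim (fun h => ⟨j, h, le_rfl⟩) (fun h => ⟨i, le_rfl, h⟩)
  have hO : O ≤ iSupOfNonempty (Subtype.val : ι → _) :=
    hle.trans (le_iSupOfNonempty (f := Subtype.val) (⟨O₀, hle, hH⟩ : ι))
  refine ⟨_, hO, unitGroup_iSupOfNonempty_le hdir fun i => i.2.2, fun O'' hlt hO'' => ?_⟩
  exact hlt.not_ge (le_iSupOfNonempty (f := Subtype.val) (⟨O'', hO.trans hlt.le, hO''⟩ : ι))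

/-- For `O ≤ O'`, the largest ideal of `O'` contained in the ideal `A` of `O`. -/
def coarsenIdeal {O : ValuationSubring K} (A : Ideal O) (O' : ValuationSubring K) :
    Ideal O' where
  carrier := {x | ∀ c : O', ∃ a ∈ A, (a : K) = c * x}
  add_mem' {x y} hx hy c := by
    obtain ⟨a, ha, hax⟩ := hx c
    obtain ⟨b, hb, hby⟩ := hy c
    exact ⟨a + b, A.add_mem ha hb, by push_cast [hax, hby]; ring⟩
  zero_mem' _ := ⟨0, A.zero_mem, by simp⟩
  smul_mem' r x hx c := by
    obtain ⟨a, ha, hax⟩ := hx (c * r)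
    exact ⟨a, ha, by rw [hax, smul_eq_mul]; push_cast; ring⟩

variable {O O' : ValuationSubring K} {A : Ideal O}

theorem mem_coarsenIdeal {x : O'} :
    x ∈ coarsenIdeal A O' ↔ ∀ c : O', ∃ a ∈ A, (a : K) = c * x :=
  Iff.rfl

theorem coarsenIdeal_ne_top (hA : A ≠ ⊤) : coarsenIdeal A O' ≠ ⊤ := by
  intro h
  obtain ⟨a, ha, ha1⟩ := mem_coarsenIdeal.mp (h ▸ Submodule.mem_top : (1 : O') ∈ _) 1
  exact hA ((Ideal.eq_top_iff_one A).mpr (by convert ha; ext; simp [ha1]))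

theorem exists_mem_maximalIdeal_of_le (hle : O ≤ O') {x : O'}
    (hx : x ∈ IsLocalRing.maximalIdeal O') :
    ∃ y ∈ IsLocalRing.maximalIdeal O, (y : K) = x := by
  obtain ⟨_, hy⟩ := mem_nonunits_iff_exists_mem_maximalIdeal.mp
    (nonunits_le_nonunits.mpr hle (coe_mem_nonunits_iff.mpr hx))
  exact ⟨_, hy, rfl⟩

theorem maximalIdeal_le_radical_coarsenIdeal (hle : O ≤ O')
    (hA : A.radical = IsLocalRing.maximalIdeal O) :
    IsLocalRing.maximalIdeal O' ≤ (coarsenIdeal A O').radical := by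
  intro x hx
  obtain ⟨y, hy, hyx⟩ := exists_mem_maximalIdeal_of_le hle hx
  obtain ⟨m, hm⟩ : y ∈ A.radical := hA ▸ hy
  refine ⟨m + 1, fun c => ?_⟩
  -- `c * x` lies in the maximal ideal of `O'`, hence in `O`, and `c * x ^ (m + 1) = c * x * y ^ m`.
  obtain ⟨z, -, hz⟩ := exists_mem_maximalIdeal_of_le hle (Ideal.mul_mem_left _ c hx)
  exact ⟨z * y ^ m, Ideal.mul_mem_left _ _ hm, by push_cast [hz, hyx]; ring⟩

theorem radical_coarsenIdeal (hle : O ≤ O') (hA : A.radical = IsLocalRing.maximalIdeal O) :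
    (coarsenIdeal A O').radical = IsLocalRing.maximalIdeal O' := by
  have hA_ne_top : A ≠ ⊤ := fun h => (IsLocalRing.maximalIdeal.isMaximal O).ne_top
    (by rw [← hA, h, Ideal.radical_top])
  refine le_antisymm ?_ (maximalIdeal_le_radical_coarsenIdeal hle hA)
  exact ((IsLocalRing.maximalIdeal.isMaximal O').isPrime.radical_le_iff).mpr
    (IsLocalRing.le_maximalIdeal (coarsenIdeal_ne_top hA_ne_top))

end ValuationSubring

section Compatibility

open ValuationSubring

variable {K : Type*} [Field K] {O O' : ValuationSubring K} {G : Subgroup Kˣ}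

theorem WeaklyCompatible.mono (hle : O ≤ O') (hw : WeaklyCompatible O G) :
    WeaklyCompatible O' G := by
  obtain ⟨A, hA, hAG⟩ := hw
  refine ⟨coarsenIdeal A O', radical_coarsenIdeal hle hA, fun x hx => ?_⟩
  obtain ⟨a, ha, hax⟩ := mem_coarsenIdeal.mp hx 1
  obtain ⟨u, hu, hua⟩ := hAG a ha
  exact ⟨u, hu, by rw [hua, hax, OneMemClass.coe_one, one_mul]⟩

theorem CoarselyCompatible.subgroup_ne_top (h : CoarselyCompatible O G) (hO : O ≠ ⊤) :
    G ≠ ⊤ := by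
  rintro rfl
  exact h.2 ⊤ (lt_top_iff_ne_top.mpr hO) le_top

theorem WeaklyCompatible.exists_coarselyCompatible (hw : WeaklyCompatible O G) (hO : O ≠ ⊤)
    (hG : G ≠ ⊤) : ∃ O' : ValuationSubring K, CoarselyCompatible O' G ∧ O' ≠ ⊤ := by
  by_cases hS : ∃ O₀ : ValuationSubring K, O ≤ O₀ ∧ O₀.unitGroup ≤ G
  · obtain ⟨O₀, hle₀, hG₀⟩ := hS
    obtain ⟨O', hle, hG', hmax⟩ := exists_maximal_coarsening_unitGroup_le hle₀ hG₀
    refine ⟨O', ⟨hw.mono hle, hmax⟩, ?_⟩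
    rintro rfl
    exact hG (top_unique (unitGroup_top (K := K) ▸ hG'))
  · push Not at hS
    exact ⟨O, ⟨hw, fun O' hlt => hS O' hlt.le⟩, hO⟩

end Compatibility

theorem OG_nontrivial_iff
    {K : Type*} [Field K] (G : Subgroup Kˣ) :
    (⋂ O ∈ {O : ValuationSubring K | CoarselyCompatible O G}, (O : Set K)) ≠ Set.univ ↔
      (G ≠ ⊤ ∧ ∃ O : ValuationSubring K, (O : Set K) ≠ Set.univ ∧ WeaklyCompatible O G) := by
  simp only [Ne, Set.iInter_eq_univ, Set.mem_ofPred_eq, ValuationSubring.coe_eq_univ_iff,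
    not_forall, exists_prop]
  constructor
  · rintro ⟨O, hcc, hO⟩
    exact ⟨hcc.subgroup_ne_top hO, O, hO, hcc.1⟩
  · rintro ⟨hG, O, hO, hw⟩
    exact hw.exists_coarselyCompatible hO hG
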